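/- Let H be a tournament with at least two vertices and let T be a nonempty tournament that is H-far. Then for every integer k ≥ 0 there exists an H-free tournament G with |G| = |T|^k and tr(G) = tr(T)^k. -/

import Mathlib

open Finset

attribute [local instance] Classical.propDecidable

/-- A tournament on vertex set `Fin n`: for every pair of distinct vertices exactly one
direction is present, and no vertex is adjacent to itself. -/
structure Tournament where
  n : ℕ
  adj : Fin n → Fin n → Prop
  asymm : ∀ u v, adj u v → ¬ adj v u
  total : ∀ u v, u ≠ v → adj u v ∨ adj v u

namespace Tournament

/-- `S` is a transitive set: the adjacency relation restricted to `S` is a strict linear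
order (by the tournament axioms this is equivalent to transitivity on `S`). -/
def IsTransitiveSet (T : Tournament) (S : Finset (Fin T.n)) : Prop :=
  ∀ a ∈ S, ∀ b ∈ S, ∀ c ∈ S, T.adj a b → T.adj b c → T.adj a c

/-- `tr T`: the maximum size of a transitive subset of the vertices of `T`. -/
noncomputable def transNum (T : Tournament) : ℕ :=
  sSup {m | ∃ S : Finset (Fin T.n), T.IsTransitiveSet S ∧ S.card = m}

/-- `T` contains an induced copy of `H`. -/
def Contains (T H : Tournament) : Prop :=
  ∃ f : Fin H.n → Fin T.n, Function.Injective f ∧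
    ∀ u v : Fin H.n, H.adj u v ↔ T.adj (f u) (f v)

/-- `T` is `H`-free: no set of vertices of `T` induces a subtournament isomorphic to `H`. -/
def HFree (T H : Tournament) : Prop := ¬ T.Contains H

/-- `S` is a homogeneous set of `T`. -/
def IsHomogeneous (T : Tournament) (S : Finset (Fin T.n)) : Prop :=
  ∀ v, v ∉ S → (∀ s ∈ S, T.adj v s) ∨ (∀ s ∈ S, T.adj s v)

/-- A tournament is prime if it has no nontrivial homogeneous set. -/
def IsPrime (T : Tournament) : Prop :=
  ¬ ∃ S : Finset (Fin T.n), T.IsHomogeneous S ∧ 1 < S.card ∧ S.card < T.n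

/-- The backward-edge graph of `T` under the ordering `σ` (where `σ p` is the vertex in
position `p`): `u` and `v` are joined iff the tournament edge between them goes from the
later position to the earlier one. -/
def backAdj (T : Tournament) (σ : Equiv.Perm (Fin T.n)) (u v : Fin T.n) : Prop :=
  (σ.symm u < σ.symm v ∧ T.adj v u) ∨ (σ.symm v < σ.symm u ∧ T.adj u v)

/-- `σ` is a galaxy ordering of `T` with center assignment `ctr` (mapping each vertex to the
center of its star component, centers and singletons being fixed points): every backward edge
joins a leaf to its center, each star is a left star or a right star, and no center of a star
lies between two leaves of another star. -/
def IsGalaxyOrdering (T : Tournament) (σ : Equiv.Perm (Fin T.n))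
    (ctr : Fin T.n → Fin T.n) : Prop :=
  (∀ v, ctr (ctr v) = ctr v) ∧
  (∀ v, ctr v ≠ v → T.backAdj σ v (ctr v)) ∧
  (∀ u v, T.backAdj σ u v → (ctr u = u ∧ ctr v = u) ∨ (ctr v = v ∧ ctr u = v)) ∧
  (∀ c, ctr c = c →
    (∀ v, ctr v = c → v = c ∨ σ.symm v < σ.symm c) ∨
    (∀ v, ctr v = c → v = c ∨ σ.symm c < σ.symm v)) ∧
  (∀ c, ctr c = c → (∃ v, v ≠ c ∧ ctr v = c) →
    ∀ l₁ l₂, l₁ ≠ ctr l₁ → l₂ ≠ ctr l₂ → ctr l₁ = ctr l₂ → ctr l₁ ≠ c →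
      ¬ (σ.symm l₁ < σ.symm c ∧ σ.symm c < σ.symm l₂))

/-- A tournament is a galaxy if it admits a galaxy ordering. -/
def IsGalaxy (T : Tournament) : Prop := ∃ σ ctr, T.IsGalaxyOrdering σ ctr

/-- A tournament is a star: it has an ordering of its vertices under which the backward-edge
graph is connected and is a star `K_{1,t}` whose center comes before all its leaves or after
all its leaves. -/
def IsStar (T : Tournament) : Prop :=
  ∃ (σ : Equiv.Perm (Fin T.n)) (c : Fin T.n),
    (∀ v, v ≠ c → T.backAdj σ c v) ∧
    (∀ u v, T.backAdj σ u v → u = c ∨ v = c) ∧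
    ((∀ v, v ≠ c → σ.symm c < σ.symm v) ∨ (∀ v, v ≠ c → σ.symm v < σ.symm c))

/-- `P` is a partition of the vertex set of `T` into transitive sets. -/
def IsTransPartition (T : Tournament) (P : Finset (Finset (Fin T.n))) : Prop :=
  (∀ S ∈ P, T.IsTransitiveSet S) ∧ ∀ v : Fin T.n, ∃! S, S ∈ P ∧ v ∈ S

/-- The chromatic number of `T`: the least number of parts in a partition of the vertices of
`T` into transitive sets. -/
noncomputable def chromaticNum (T : Tournament) : ℕ :=
  sInf {m | ∃ P : Finset (Finset (Fin T.n)), T.IsTransPartition P ∧ P.card = m}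

/-- The directed density from `X` to `Y`. -/
noncomputable def density (T : Tournament) (X Y : Finset (Fin T.n)) : ℝ :=
  (((X ×ˢ Y).filter fun p => T.adj p.1 p.2).card : ℝ) / ((X.card : ℝ) * (Y.card : ℝ))

/-- Common part of the definitions of l-sequences and m-sequences: pairwise disjoint
nonempty sets with density at least `1 - lam` forwards. -/
def SeqBase (T : Tournament) (lam : ℝ) (m : ℕ) (S : Fin m → Finset (Fin T.n)) : Prop :=
  (∀ i, (S i).Nonempty) ∧ (∀ i j, i ≠ j → Disjoint (S i) (S j)) ∧
  ∀ i j : Fin m, i < j → 1 - lam ≤ T.density (S i) (S j)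

/-- A `(c, lam)`-l-sequence: every set is `c`-linear. -/
def IsLSeq (T : Tournament) (c lam : ℝ) (m : ℕ) (S : Fin m → Finset (Fin T.n)) : Prop :=
  T.SeqBase lam m S ∧ ∀ i, c * (T.n : ℝ) ≤ ((S i).card : ℝ)

/-- A `(c₁, c₂, lam, eps)`-m-sequence: sets in odd positions (even `0`-based indices) are
`c₂`-linear, sets in even positions are transitive and `(c₁, eps)`-big. -/
def IsMSeq (T : Tournament) (c₁ c₂ lam eps : ℝ) (m : ℕ)
    (S : Fin m → Finset (Fin T.n)) : Prop :=
  T.SeqBase lam m S ∧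
  (∀ i : Fin m, (i : ℕ) % 2 = 0 → c₂ * (T.n : ℝ) ≤ ((S i).card : ℝ)) ∧
  (∀ i : Fin m, (i : ℕ) % 2 = 1 →
    T.IsTransitiveSet (S i) ∧ c₁ * (T.n : ℝ) ^ eps ≤ ((S i).card : ℝ))

/-- A sequence of sets is smooth if the `1 - lam` density condition holds pointwise. -/
def Smooth (T : Tournament) (lam : ℝ) (m : ℕ) (S : Fin m → Finset (Fin T.n)) : Prop :=
  ∀ i j : Fin m, i < j →
    (∀ v ∈ S i, 1 - lam ≤ T.density {v} (S j)) ∧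
    (∀ v ∈ S j, 1 - lam ≤ T.density (S i) {v})

/-- `P` is a partition of the vertex set of `T` into homogeneous sets. -/
def IsHomogeneousPartition (T : Tournament) (P : Finset (Finset (Fin T.n))) : Prop :=
  (∀ A ∈ P, A.Nonempty ∧ T.IsHomogeneous A) ∧ ∀ v : Fin T.n, ∃! A, A ∈ P ∧ v ∈ A

/-- `p T`: the least number of parts of a nontrivial homogeneous partition. -/
noncomputable def partNum (T : Tournament) : ℕ :=
  sInf {m | ∃ P : Finset (Finset (Fin T.n)),
    T.IsHomogeneousPartition P ∧ 1 < P.card ∧ P.card = m}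

/-- `T` is `H`-far: for every nontrivial homogeneous partition `P` of the vertices of `H`,
`T` contains no subtournament isomorphic to the quotient tournament `H_P`. -/
def HFar (T H : Tournament) : Prop :=
  ∀ P : Finset (Finset (Fin H.n)), H.IsHomogeneousPartition P → 1 < P.card →
    ¬ ∃ g : {A // A ∈ P} → Fin T.n, Function.Injective g ∧
        ∀ A B : {A // A ∈ P}, A ≠ B →
          ((∀ a ∈ A.1, ∀ b ∈ B.1, H.adj a b) ↔ T.adj (g A) (g B))

/-!
The witness is the iterated lexicographic product `T[T[⋯T[1]⋯]]`, where `1` is the one-vertex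
tournament. A transitive set of `T[G]` projects onto a transitive set of `T` and meets each copy
of `G` in a transitive set of `G`, so `tr(T[G]) = tr(T) · tr(G)`. A copy of `H` in `T[G]` either lies in a single copy of `G`, or
the copies of `G` it meets cut `H` into a nontrivial homogeneous partition whose quotient
embeds in `T`; `H`-farness of `T` rules out the second case.
-/

variable {T G H : Tournament}

lemma adj_irrefl (T : Tournament) (v : Fin T.n) : ¬ T.adj v v :=
  fun h => T.asymm v v h h

lemma ne_of_adj {a b : Fin T.n} (h : T.adj a b) : a ≠ b := by
  rintro rfl
  exact T.adj_irrefl a h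

lemma ne_of_adj_of_adj {a b c : Fin T.n} (hab : T.adj a b) (hbc : T.adj b c) : a ≠ c := by
  rintro rfl
  exact T.asymm a b hab hbc

lemma bddAbove_card_isTransitiveSet (T : Tournament) :
    BddAbove {m | ∃ S : Finset (Fin T.n), T.IsTransitiveSet S ∧ S.card = m} :=
  ⟨T.n, by rintro m ⟨S, -, rfl⟩; simpa using S.card_le_univ⟩

lemma le_transNum {S : Finset (Fin T.n)} (hS : T.IsTransitiveSet S) : S.card ≤ T.transNum :=
  le_csSup T.bddAbove_card_isTransitiveSet ⟨S, hS, rfl⟩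

lemma exists_isTransitiveSet_card_eq_transNum (T : Tournament) :
    ∃ S : Finset (Fin T.n), T.IsTransitiveSet S ∧ S.card = T.transNum :=
  Nat.sSup_mem (s := {m | ∃ S : Finset (Fin T.n), T.IsTransitiveSet S ∧ S.card = m})
    ⟨0, ∅, by simp [IsTransitiveSet], rfl⟩ T.bddAbove_card_isTransitiveSet

lemma transNum_le (T : Tournament) : T.transNum ≤ T.n := by
  obtain ⟨S, -, hS⟩ := T.exists_isTransitiveSet_card_eq_transNum
  simpa [← hS] using S.card_le_univ

lemma IsTransitiveSet.mono {S S' : Finset (Fin T.n)} (hS : T.IsTransitiveSet S) (h : S' ⊆ S) :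
    T.IsTransitiveSet S' :=
  fun a ha b hb c hc => hS a (h ha) b (h hb) c (h hc)

lemma IsTransitiveSet.image {T' : Tournament} {S : Finset (Fin T.n)} (hS : T.IsTransitiveSet S)
    (f : Fin T.n → Fin T'.n) (hrefl : ∀ u ∈ S, ∀ v ∈ S, T'.adj (f u) (f v) → T.adj u v)
    (hpres : ∀ u ∈ S, ∀ v ∈ S, f u ≠ f v → T.adj u v → T'.adj (f u) (f v)) :
    T'.IsTransitiveSet (S.image f) := by
  simp only [IsTransitiveSet, Finset.forall_mem_image]
  intro u hu v hv w hw huv hvw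
  exact hpres u hu w hw (ne_of_adj_of_adj huv hvw)
    (hS u hu v hv w hw (hrefl u hu v hv huv) (hrefl v hv w hw hvw))

lemma isHomogeneous_of_adj_iff (F : Fin H.n → Fin T.n)
    (hF : ∀ u v, F u ≠ F v → (H.adj u v ↔ T.adj (F u) (F v)))
    {A : Finset (Fin H.n)} {c : Fin T.n} (hA : ∀ a, a ∈ A ↔ F a = c) : H.IsHomogeneous A := by
  intro v hv
  have hvc : F v ≠ c := fun h => hv ((hA v).2 h)
  rcases T.total (F v) c hvc with h | h
  · refine Or.inl fun s hs => ?_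
    rw [hA] at hs
    exact (hF v s (hs ▸ hvc)).2 (hs ▸ h)
  · refine Or.inr fun s hs => ?_
    rw [hA] at hs
    exact (hF s v (hs ▸ hvc.symm)).2 (hs ▸ h)

/-- Otherwise the fibres of `F` would form a nontrivial homogeneous partition of `H` whose
quotient `F` embeds in `T`. -/
lemma HFar.apply_eq_apply (hfar : T.HFar H) (F : Fin H.n → Fin T.n)
    (hF : ∀ u v, F u ≠ F v → (H.adj u v ↔ T.adj (F u) (F v))) (u v : Fin H.n) : F u = F v := by
  by_contra huv
  set P := Finpartition.ofSetoid (Setoid.ker F)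
  have mem_part {a b : Fin H.n} : b ∈ P.part a ↔ F b = F a :=
    Finpartition.mem_part_ofSetoid_iff_rel.trans eq_comm
  choose r hr using fun A : {A // A ∈ P.parts} => P.nonempty_of_mem_parts A.2
  have mem_iff (A : {A // A ∈ P.parts}) (a : Fin H.n) : a ∈ A.1 ↔ F a = F (r A) := by
    rw [← P.part_eq_of_mem A.2 (hr A), mem_part]
  have hpart : H.IsHomogeneousPartition P.parts := by
    refine ⟨fun A hA => ⟨P.nonempty_of_mem_parts hA, ?_⟩,
      fun v => P.existsUnique_mem (Finset.mem_univ v)⟩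
    exact isHomogeneous_of_adj_iff F hF (mem_iff ⟨A, hA⟩)
  have hcard : 1 < P.parts.card := by
    refine Finset.one_lt_card.2 ⟨P.part u, P.part_mem.2 (Finset.mem_univ u),
      P.part v, P.part_mem.2 (Finset.mem_univ v), fun h => huv ?_⟩
    exact mem_part.1 (h ▸ P.mem_part (Finset.mem_univ u))
  have hinj : Function.Injective fun A => F (r A) := fun A B (h : F (r A) = F (r B)) =>
    Subtype.ext (Finset.ext fun a => by rw [mem_iff, mem_iff, h])
  refine hfar P.parts hpart hcard ⟨fun A => F (r A), hinj, fun A B hAB => ⟨fun h => ?_, ?_⟩⟩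
  · exact (hF _ _ (hinj.ne hAB)).1 (h _ (hr A) _ (hr B))
  · intro h a ha b hb
    rw [mem_iff] at ha hb
    exact (hF a b (ha ▸ hb ▸ hinj.ne hAB)).2 (ha ▸ hb ▸ h)

/-- The lexicographic product `T[G]`: vertex `finProdFinEquiv (x, y)` is the copy of `y` in the
copy of `G` substituted for `x`. -/
def lexProd (T G : Tournament) : Tournament where
  n := T.n * G.n
  adj u v := Prod.Lex T.adj G.adj (finProdFinEquiv.symm u) (finProdFinEquiv.symm v)
  asymm u v := by
    simp only [Prod.lex_def]
    rintro (h | ⟨h₁, h⟩) (h' | ⟨h₁', h'⟩)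
    · exact T.asymm _ _ h h'
    · exact T.adj_irrefl _ (h₁' ▸ h)
    · exact T.adj_irrefl _ (h₁ ▸ h')
    · exact G.asymm _ _ h h'
  total u v huv := by
    simp only [Prod.lex_def]
    by_cases h₁ : (finProdFinEquiv.symm u).1 = (finProdFinEquiv.symm v).1
    · have h₂ : (finProdFinEquiv.symm u).2 ≠ (finProdFinEquiv.symm v).2 := fun h₂ =>
        huv (finProdFinEquiv.symm.injective (Prod.ext h₁ h₂))
      rcases G.total _ _ h₂ with h | h
      exacts [Or.inl (Or.inr ⟨h₁, h⟩), Or.inr (Or.inr ⟨h₁.symm, h⟩)]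
    · rcases T.total _ _ h₁ with h | h
      exacts [Or.inl (Or.inl h), Or.inr (Or.inl h)]

def lexProdEquiv (T G : Tournament) : Fin T.n × Fin G.n ≃ Fin (T.lexProd G).n := finProdFinEquiv

section lexProd

variable {u v : Fin (T.lexProd G).n}

abbrev lexFst (u : Fin (T.lexProd G).n) : Fin T.n := ((lexProdEquiv T G).symm u).1

abbrev lexSnd (u : Fin (T.lexProd G).n) : Fin G.n := ((lexProdEquiv T G).symm u).2

lemma lexProd_adj :
    (T.lexProd G).adj u v ↔
      Prod.Lex T.adj G.adj ((lexProdEquiv T G).symm u) ((lexProdEquiv T G).symm v) :=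
  Iff.rfl

lemma lexProd_ext (h₁ : lexFst u = lexFst v) (h₂ : lexSnd u = lexSnd v) : u = v :=
  (lexProdEquiv T G).symm.injective (Prod.ext h₁ h₂)

lemma lexProd_adj_of_lexFst_eq (h : lexFst u = lexFst v) :
    (T.lexProd G).adj u v ↔ G.adj (lexSnd u) (lexSnd v) := by
  rw [lexProd_adj, Prod.lex_def]
  simp [h, adj_irrefl]

lemma lexProd_adj_of_lexFst_ne (h : lexFst u ≠ lexFst v) :
    (T.lexProd G).adj u v ↔ T.adj (lexFst u) (lexFst v) := by
  rw [lexProd_adj, Prod.lex_def]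
  simp [h]

lemma IsTransitiveSet.image_lexFst {S : Finset (Fin (T.lexProd G).n)}
    (hS : (T.lexProd G).IsTransitiveSet S) : T.IsTransitiveSet (S.image lexFst) :=
  hS.image lexFst
    (fun _ _ _ _ h => (lexProd_adj_of_lexFst_ne (ne_of_adj h)).2 h)
    (fun _ _ _ _ huv => (lexProd_adj_of_lexFst_ne huv).1)

lemma IsTransitiveSet.image_lexSnd {S : Finset (Fin (T.lexProd G).n)}
    (hS : (T.lexProd G).IsTransitiveSet S) (x : Fin T.n) :
    G.IsTransitiveSet ((S.filter (lexFst · = x)).image lexSnd) := by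
  have hfiber : ∀ u ∈ S.filter (lexFst · = x), ∀ v ∈ S.filter (lexFst · = x),
      lexFst u = lexFst v := by
    simp only [Finset.mem_filter]
    rintro u ⟨-, rfl⟩ v ⟨-, hv⟩
    exact hv.symm
  refine (hS.mono (Finset.filter_subset _ S)).image lexSnd
    (fun u hu v hv => (lexProd_adj_of_lexFst_eq (hfiber u hu v hv)).2)
    (fun u hu v hv _ => (lexProd_adj_of_lexFst_eq (hfiber u hu v hv)).1)

lemma card_le_of_isTransitiveSet_lexProd {S : Finset (Fin (T.lexProd G).n)}
    (hS : (T.lexProd G).IsTransitiveSet S) : S.card ≤ T.transNum * G.transNum :=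
  calc S.card = ∑ x ∈ S.image lexFst, (S.filter (lexFst · = x)).card :=
        Finset.card_eq_sum_card_image _ _
    _ = ∑ x ∈ S.image lexFst, ((S.filter (lexFst · = x)).image lexSnd).card := by
        refine Finset.sum_congr rfl fun x _ => (Finset.card_image_of_injOn ?_).symm
        intro u hu v hv h
        simp only [Finset.coe_filter, Set.mem_ofPred_eq] at hu hv
        exact lexProd_ext (hu.2.trans hv.2.symm) h
    _ ≤ ∑ _x ∈ S.image lexFst, G.transNum :=
        Finset.sum_le_sum fun x _ => le_transNum (hS.image_lexSnd x)
    _ ≤ T.transNum * G.transNum := by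
        rw [Finset.sum_const, smul_eq_mul]
        exact Nat.mul_le_mul_right _ (le_transNum hS.image_lexFst)

lemma IsTransitiveSet.lexProd {A : Finset (Fin T.n)} {B : Finset (Fin G.n)}
    (hA : T.IsTransitiveSet A) (hB : G.IsTransitiveSet B) :
    (T.lexProd G).IsTransitiveSet ((A ×ˢ B).map (lexProdEquiv T G).toEmbedding) := by
  intro x hx y hy z hz
  rw [Finset.mem_map_equiv, Finset.mem_product] at hx hy hz
  simp only [lexProd_adj, Prod.lex_def]
  rintro (h | ⟨e₁, h⟩) (h' | ⟨e₂, h'⟩)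
  · exact Or.inl (hA _ hx.1 _ hy.1 _ hz.1 h h')
  · exact Or.inl (e₂ ▸ h)
  · exact Or.inl (e₁ ▸ h')
  · exact Or.inr ⟨e₁.trans e₂, hB _ hx.2 _ hy.2 _ hz.2 h h'⟩

theorem transNum_lexProd (T G : Tournament) :
    (T.lexProd G).transNum = T.transNum * G.transNum := by
  obtain ⟨S, hS, hcard⟩ := (T.lexProd G).exists_isTransitiveSet_card_eq_transNum
  obtain ⟨A, hA, hAcard⟩ := T.exists_isTransitiveSet_card_eq_transNum
  obtain ⟨B, hB, hBcard⟩ := G.exists_isTransitiveSet_card_eq_transNum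
  refine le_antisymm (hcard ▸ card_le_of_isTransitiveSet_lexProd hS) ?_
  have := le_transNum (hA.lexProd hB)
  rwa [Finset.card_map, Finset.card_product, hAcard, hBcard] at this

lemma HFar.hFree_lexProd (hfar : T.HFar H) (hG : G.HFree H) : (T.lexProd G).HFree H := by
  rintro ⟨f, hf, hadj⟩
  have hconst : ∀ u v, lexFst (f u) = lexFst (f v) :=
    hfar.apply_eq_apply (lexFst ∘ f) fun u v h => (hadj u v).trans (lexProd_adj_of_lexFst_ne h)
  exact hG ⟨lexSnd ∘ f, fun u v h => hf (lexProd_ext (hconst u v) h),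
    fun u v => (hadj u v).trans (lexProd_adj_of_lexFst_eq (hconst u v))⟩

end lexProd

def unit : Tournament where
  n := 1
  adj _ _ := False
  asymm _ _ h := h.elim
  total u v h := absurd (Subsingleton.elim u v) h

lemma transNum_unit : unit.transNum = 1 :=
  le_antisymm unit.transNum_le <| by
    simpa using le_transNum (T := unit) (S := {⟨0, Nat.one_pos⟩}) fun _ _ _ _ _ _ h => h.elim

lemma unit_hFree (hH : 2 ≤ H.n) : unit.HFree H := fun ⟨f, hf, _⟩ => by
  have := Fin.le_of_injective f hf
  simp only [unit] at this
  omega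

def lexPow (T : Tournament) : ℕ → Tournament
  | 0 => unit
  | k + 1 => T.lexProd (T.lexPow k)

lemma lexPow_n (T : Tournament) (k : ℕ) : (T.lexPow k).n = T.n ^ k := by
  induction k with
  | zero => rfl
  | succ k ih => rw [pow_succ', ← ih]; rfl

lemma transNum_lexPow (T : Tournament) (k : ℕ) : (T.lexPow k).transNum = T.transNum ^ k := by
  induction k with
  | zero => exact transNum_unit
  | succ k ih => rw [lexPow, transNum_lexProd, ih, pow_succ']

lemma HFar.hFree_lexPow (hfar : T.HFar H) (hH : 2 ≤ H.n) (k : ℕ) : (T.lexPow k).HFree H := by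
  induction k with
  | zero => exact unit_hFree hH
  | succ k ih => exact hfar.hFree_lexProd ih

end Tournament

open Tournament

theorem stmt13_general (H T : Tournament) (hH : 2 ≤ H.n) (hfar : T.HFar H) :
    ∀ k : ℕ, ∃ G : Tournament, G.HFree H ∧ G.n = T.n ^ k ∧
      G.transNum = T.transNum ^ k :=
  fun k => ⟨T.lexPow k, hfar.hFree_lexPow hH k, T.lexPow_n k, T.transNum_lexPow k⟩

/-- Let H be a tournament with at least two vertices and T a nonempty
tournament that is H-far. Then for every integer k ≥ 0 there exists an H-free tournament G
with |G| = |T|^k and tr(G) = tr(T)^k. -/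
theorem stmt13 (H T : Tournament) (hH : 2 ≤ H.n) (hT : 0 < T.n) (hfar : T.HFar H) :
    ∀ k : ℕ, ∃ G : Tournament, G.HFree H ∧ G.n = T.n ^ k ∧
      G.transNum = T.transNum ^ k :=
  stmt13_general H T hH hfar
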